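/- arXiv:1901.05494 — 3 statements merged into one kernel-verified Lean document; each statement's English description precedes it below -/
import Mathlib

section
/- Let n, U, J be natural numbers, let x* ∈ ℝⁿ, let f_u, g_u : ℝⁿ → ℝ (u ∈ Fin U) and h_j : ℝⁿ → ℝ (j ∈ Fin J) be differentiable at x*, let ω_u > 0 for all u, and suppose g_u(x*) > 0 for all u. Suppose (x*, α*) together with multipliers β* ∈ ℝ^U and μ* ∈ ℝ^J satisfies the KKT conditions of the fractional-constraint problem: maximize Σ_u ω_u α_u over (x, α) subject to α_u·g_u(x) − f_u(x) ≤ 0 for all u and h_j(x) ≤ 0 for all j; that is: (feasibility) α*_u·g_u(x*) ≤ f_u(x*) and h_j(x*) ≤ 0; (nonnegativity) β*_u ≥ 0 and μ*_j ≥ 0; (stationarity in α) ω_u − β*_u·g_u(x*) = 0 for all u; (stationarity in x) Σ_u β*_u·(∇f_u(x*) − α*_u·∇g_u(x*)) = Σ_j μ*_j·∇h_j(x*); (complementary slackness) β*_u·(α*_u·g_u(x*) − f_u(x*)) = 0 for all u and μ*_j·h_j(x*) = 0 for all j. Then β*_u = ω_u / g_u(x*) and α*_u = f_u(x*) / g_u(x*)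 for every u, and x* together with the multipliers μ* satisfies the KKT conditions of the parametric subtractive problem: maximize Σ_u β*_u·(f_u(x) − α*_u·g_u(x)) over x subject to h_j(x) ≤ 0 for all j; that is: h_j(x*) ≤ 0, μ*_j ≥ 0, μ*_j·h_j(x*) = 0 for all j, and Σ_u β*_u·(∇f_u(x*) − α*_u·∇g_u(x*)) = Σ_j μ*_j·∇h_j(x*). -/
/-!
Stationarity in `α` gives `β u = ω u / g u x`, which is positive; complementary slackness then
forces every fractional constraint to be active, i.e. `α u = f u x / g u x`. The KKT conditions of
the subtractive problem are those of the epigraph problem that involve `x` alone.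
-/

theorem eq_div_of_sub_mul_eq_zero {K : Type*} [Field K] {ω β g : K} (hg : g ≠ 0)
    (h : ω - β * g = 0) : β = ω / g :=
  (eq_div_iff hg).2 (sub_eq_zero.1 h).symm

theorem eq_div_of_mul_mul_sub_eq_zero {K : Type*} [Field K] {α β f g : K} (hβ : β ≠ 0)
    (hg : g ≠ 0) (h : β * (α * g - f) = 0) : α = f / g :=
  (eq_div_iff hg).2 (sub_eq_zero.1 ((mul_eq_zero.1 h).resolve_left hβ))

theorem stmt_0_general (n U J : ℕ) (x : EuclideanSpace ℝ (Fin n))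
    (f g : Fin U → EuclideanSpace ℝ (Fin n) → ℝ)
    (h : Fin J → EuclideanSpace ℝ (Fin n) → ℝ)
    (ω α β : Fin U → ℝ) (μ : Fin J → ℝ)
    (hω : ∀ u, 0 < ω u)
    (hgpos : ∀ u, 0 < g u x)
    -- KKT conditions of the fractional-constraint problem:
    (feas_ineq : ∀ j, h j x ≤ 0)
    (hμnn : ∀ j, 0 ≤ μ j)
    (stat_α : ∀ u, ω u - β u * g u x = 0)
    (stat_x : ∑ u, β u • (fderiv ℝ (f u) x - α u • fderiv ℝ (g u) x)
            = ∑ j, μ j • fderiv ℝ (h j) x)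
    (cs_frac : ∀ u, β u * (α u * g u x - f u x) = 0)
    (cs_ineq : ∀ j, μ j * h j x = 0) :
    -- parameter equations:
    (∀ u, β u = ω u / g u x) ∧ (∀ u, α u = f u x / g u x) ∧
    -- KKT conditions of the parametric subtractive problem:
    (∀ j, h j x ≤ 0) ∧ (∀ j, 0 ≤ μ j) ∧ (∀ j, μ j * h j x = 0) ∧
    (∑ u, β u • (fderiv ℝ (f u) x - α u • fderiv ℝ (g u) x)
      = ∑ j, μ j • fderiv ℝ (h j) x) := by
  have hβ u : β u = ω u / g u x := eq_div_of_sub_mul_eq_zero (hgpos u).ne' (stat_α u)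
  have hβpos u : 0 < β u := hβ u ▸ div_pos (hω u) (hgpos u)
  refine ⟨hβ, fun u ↦ ?_, feas_ineq, hμnn, cs_ineq, stat_x⟩
  exact eq_div_of_mul_mul_sub_eq_zero (hβpos u).ne' (hgpos u).ne' (cs_frac u)

/-- Forward direction of Theorem 1: a KKT point of the fractional-constraint
(epigraph) problem yields the parameter equations β* = ω/g(x*), α* = f(x*)/g(x*),
and satisfies the KKT conditions of the parametric subtractive problem. -/
theorem stmt_0 (n U J : ℕ) (x : EuclideanSpace ℝ (Fin n))
    (f g : Fin U → EuclideanSpace ℝ (Fin n) → ℝ)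
    (h : Fin J → EuclideanSpace ℝ (Fin n) → ℝ)
    (ω α β : Fin U → ℝ) (μ : Fin J → ℝ)
    (hf : ∀ u, DifferentiableAt ℝ (f u) x)
    (hg : ∀ u, DifferentiableAt ℝ (g u) x)
    (hh : ∀ j, DifferentiableAt ℝ (h j) x)
    (hω : ∀ u, 0 < ω u)
    (hgpos : ∀ u, 0 < g u x)
    -- KKT conditions of the fractional-constraint problem:
    (feas_frac : ∀ u, α u * g u x ≤ f u x)
    (feas_ineq : ∀ j, h j x ≤ 0)
    (hβnn : ∀ u, 0 ≤ β u)
    (hμnn : ∀ j, 0 ≤ μ j)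
    (stat_α : ∀ u, ω u - β u * g u x = 0)
    (stat_x : ∑ u, β u • (fderiv ℝ (f u) x - α u • fderiv ℝ (g u) x)
            = ∑ j, μ j • fderiv ℝ (h j) x)
    (cs_frac : ∀ u, β u * (α u * g u x - f u x) = 0)
    (cs_ineq : ∀ j, μ j * h j x = 0) :
    -- parameter equations:
    (∀ u, β u = ω u / g u x) ∧ (∀ u, α u = f u x / g u x) ∧
    -- KKT conditions of the parametric subtractive problem:
    (∀ j, h j x ≤ 0) ∧ (∀ j, 0 ≤ μ j) ∧ (∀ j, μ j * h j x = 0) ∧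
    (∑ u, β u • (fderiv ℝ (f u) x - α u • fderiv ℝ (g u) x)
      = ∑ j, μ j • fderiv ℝ (h j) x) :=
  stmt_0_general n U J x f g h ω α β μ hω hgpos feas_ineq hμnn stat_α stat_x cs_frac cs_ineq
end

section
/- Let n, U, J be natural numbers, let x* ∈ ℝⁿ, let f_u, g_u : ℝⁿ → ℝ (u ∈ Fin U) and h_j : ℝⁿ → ℝ (j ∈ Fin J) be differentiable at x*, let ω_u > 0 for all u, and suppose g_u(x*) > 0 for all u. Define the parameters α*_u = f_u(x*) / g_u(x*) and β*_u = ω_u / g_u(x*) for each u. Suppose x* together with multipliers μ* ∈ ℝ^J satisfies the KKT conditions of the parametric subtractive problem: maximize Σ_u β*_u·(f_u(x) − α*_u·g_u(x)) over x subject to h_j(x) ≤ 0 for all j; that is: h_j(x*) ≤ 0, μ*_j ≥ 0, μ*_j·h_j(x*) = 0 for all j, and Σ_u β*_u·(∇f_u(x*) − α*_u·∇g_u(x*)) = Σ_j μ*_j·∇h_j(x*). Then (x*, α*) together with the multipliers (β*, μ*) satisfies the KKT conditions of the fractional-constraint problem: maximize Σ_u ω_u α_u over (x, α) subject to α_u·g_u(x)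 − f_u(x) ≤ 0 for all u and h_j(x) ≤ 0 for all j; that is: α*_u·g_u(x*) ≤ f_u(x*) and h_j(x*) ≤ 0; β*_u ≥ 0 and μ*_j ≥ 0; ω_u − β*_u·g_u(x*) = 0 for all u; Σ_u β*_u·(∇f_u(x*) − α*_u·∇g_u(x*)) = Σ_j μ*_j·∇h_j(x*); β*_u·(α*_u·g_u(x*) − f_u(x*)) = 0 for all u and μ*_j·h_j(x*) = 0 for all j. -/
/-! With α* = f(x*)/g(x*) every fractional constraint α·g − f ≤ 0 is active at x*, so its
complementary slackness holds for any multiplier, and β* = ω/g(x*) is exactly the solution of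
the α-stationarity equation ω − β·g(x*) = 0. The x-stationarity and the conditions on the
h-constraints are those of the subtractive problem. -/

theorem stmt_1_general (n U J : ℕ) (x : EuclideanSpace ℝ (Fin n))
    (f g : Fin U → EuclideanSpace ℝ (Fin n) → ℝ)
    (h : Fin J → EuclideanSpace ℝ (Fin n) → ℝ)
    (ω α β : Fin U → ℝ) (μ : Fin J → ℝ)
    (hω : ∀ u, 0 < ω u)
    (hgpos : ∀ u, 0 < g u x)
    -- definition of the parameters:
    (hα : ∀ u, α u = f u x / g u x)
    (hβ : ∀ u, β u = ω u / g u x)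
    -- KKT conditions of the parametric subtractive problem:
    (feas_ineq : ∀ j, h j x ≤ 0)
    (hμnn : ∀ j, 0 ≤ μ j)
    (cs_ineq : ∀ j, μ j * h j x = 0)
    (stat_x : ∑ u, β u • (fderiv ℝ (f u) x - α u • fderiv ℝ (g u) x)
            = ∑ j, μ j • fderiv ℝ (h j) x) :
    -- KKT conditions of the fractional-constraint problem:
    (∀ u, α u * g u x ≤ f u x) ∧ (∀ j, h j x ≤ 0) ∧
    (∀ u, 0 ≤ β u) ∧ (∀ j, 0 ≤ μ j) ∧
    (∀ u, ω u - β u * g u x = 0) ∧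
    (∑ u, β u • (fderiv ℝ (f u) x - α u • fderiv ℝ (g u) x)
      = ∑ j, μ j • fderiv ℝ (h j) x) ∧
    (∀ u, β u * (α u * g u x - f u x) = 0) ∧ (∀ j, μ j * h j x = 0) := by
  have active : ∀ u, α u * g u x = f u x := fun u => by
    rw [hα u, div_mul_cancel₀ _ (hgpos u).ne']
  have stat_α : ∀ u, β u * g u x = ω u := fun u => by
    rw [hβ u, div_mul_cancel₀ _ (hgpos u).ne']
  have hβnn : ∀ u, 0 ≤ β u := fun u => by
    rw [hβ u]
    exact div_nonneg (hω u).le (hgpos u).le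
  refine ⟨fun u => (active u).le, feas_ineq, hβnn, hμnn, fun u => ?_, stat_x, fun u => ?_,
    cs_ineq⟩
  · rw [stat_α u, sub_self]
  · rw [active u, sub_self, mul_zero]

/-- Converse direction of Theorem 1: if, for the parameters α* = f(x*)/g(x*) and
β* = ω/g(x*), the point x* with multipliers μ* is a KKT point of the parametric
subtractive problem, then (x*, α*) with multipliers (β*, μ*) satisfies the KKT
conditions of the fractional-constraint (epigraph) problem. -/
theorem stmt_1 (n U J : ℕ) (x : EuclideanSpace ℝ (Fin n))
    (f g : Fin U → EuclideanSpace ℝ (Fin n) → ℝ)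
    (h : Fin J → EuclideanSpace ℝ (Fin n) → ℝ)
    (ω α β : Fin U → ℝ) (μ : Fin J → ℝ)
    (hf : ∀ u, DifferentiableAt ℝ (f u) x)
    (hg : ∀ u, DifferentiableAt ℝ (g u) x)
    (hh : ∀ j, DifferentiableAt ℝ (h j) x)
    (hω : ∀ u, 0 < ω u)
    (hgpos : ∀ u, 0 < g u x)
    -- definition of the parameters:
    (hα : ∀ u, α u = f u x / g u x)
    (hβ : ∀ u, β u = ω u / g u x)
    -- KKT conditions of the parametric subtractive problem:
    (feas_ineq : ∀ j, h j x ≤ 0)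
    (hμnn : ∀ j, 0 ≤ μ j)
    (cs_ineq : ∀ j, μ j * h j x = 0)
    (stat_x : ∑ u, β u • (fderiv ℝ (f u) x - α u • fderiv ℝ (g u) x)
            = ∑ j, μ j • fderiv ℝ (h j) x) :
    -- KKT conditions of the fractional-constraint problem:
    (∀ u, α u * g u x ≤ f u x) ∧ (∀ j, h j x ≤ 0) ∧
    (∀ u, 0 ≤ β u) ∧ (∀ j, 0 ≤ μ j) ∧
    (∀ u, ω u - β u * g u x = 0) ∧
    (∑ u, β u • (fderiv ℝ (f u) x - α u • fderiv ℝ (g u) x)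
      = ∑ j, μ j • fderiv ℝ (h j) x) ∧
    (∀ u, β u * (α u * g u x - f u x) = 0) ∧ (∀ j, μ j * h j x = 0) :=
  stmt_1_general n U J x f g h ω α β μ hω hgpos hα hβ feas_ineq hμnn cs_ineq stat_x
end

section
/- Let c > 0 be a real constant. The set {(f, p, N) ∈ ℝ × ℝ × ℝ : 0 ≤ f, 0 ≤ p, 0 < N, and f ≤ N · log(1 + c·p/N)} is a convex subset of ℝ³. -/
/-!
The capacity `N * log (1 + c * p / N)` is the perspective `(p, N) ↦ N * g (p / N)` of the concave
function `g p = log (1 + c * p)`, and perspectives of concave functions are jointly concave. The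
region is therefore the hypograph of a concave function, cut by the half-space `0 ≤ f`.
-/

open Set Real

theorem inv_smul_add_smul_eq {𝕜 E : Type*} [Field 𝕜] [AddCommGroup E] [Module 𝕜 E]
    {t₁ t₂ a b : 𝕜} (ht₁ : t₁ ≠ 0) (ht₂ : t₂ ≠ 0) (ht : a * t₁ + b * t₂ ≠ 0) (x₁ x₂ : E) :
    (a * t₁ + b * t₂)⁻¹ • (a • x₁ + b • x₂) =
      (a * t₁ / (a * t₁ + b * t₂)) • (t₁⁻¹ • x₁) + (b * t₂ / (a * t₁ + b * t₂)) • (t₂⁻¹ • x₂) := by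
  simp only [smul_smul, smul_add]
  congr 2 <;> field_simp

theorem ConcaveOn.perspective {𝕜 E : Type*} [Field 𝕜] [LinearOrder 𝕜] [IsStrictOrderedRing 𝕜]
    [AddCommGroup E] [Module 𝕜 E] {s : Set E} {g : E → 𝕜} (hg : ConcaveOn 𝕜 s g) :
    ConcaveOn 𝕜 {q : E × 𝕜 | 0 < q.2 ∧ q.2⁻¹ • q.1 ∈ s} (fun q => q.2 * g (q.2⁻¹ • q.1)) := by
  refine ⟨?_, ?_⟩
  · rintro ⟨x₁, t₁⟩ ⟨ht₁, hy₁⟩ ⟨x₂, t₂⟩ ⟨ht₂, hy₂⟩ a b ha hb hab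
    have ht : 0 < a * t₁ + b * t₂ := convex_Ioi 0 ht₁ ht₂ ha hb hab
    refine ⟨ht, ?_⟩
    simp only [Prod.smul_mk, Prod.mk_add_mk, smul_eq_mul]
    rw [inv_smul_add_smul_eq ht₁.ne' ht₂.ne' ht.ne']
    exact hg.1 hy₁ hy₂ (by positivity) (by positivity) (by field_simp)
  · rintro ⟨x₁, t₁⟩ ⟨ht₁, hy₁⟩ ⟨x₂, t₂⟩ ⟨ht₂, hy₂⟩ a b ha hb hab
    have ht : 0 < a * t₁ + b * t₂ := convex_Ioi 0 ht₁ ht₂ ha hb hab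
    simp only [Prod.smul_mk, Prod.mk_add_mk, smul_eq_mul]
    rw [inv_smul_add_smul_eq ht₁.ne' ht₂.ne' ht.ne']
    calc a * (t₁ * g (t₁⁻¹ • x₁)) + b * (t₂ * g (t₂⁻¹ • x₂))
        = (a * t₁ + b * t₂) * ((a * t₁ / (a * t₁ + b * t₂)) • g (t₁⁻¹ • x₁)
            + (b * t₂ / (a * t₁ + b * t₂)) • g (t₂⁻¹ • x₂)) := by
          simp only [smul_eq_mul]; field_simp
      _ ≤ _ := by
          gcongr
          exact hg.2 hy₁ hy₂ (by positivity) (by positivity) (by field_simp)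

theorem concaveOn_log_one_add_mul {c : ℝ} (hc : 0 ≤ c) :
    ConcaveOn ℝ (Ici 0) (fun p => log (1 + c * p)) := by
  refine (strictConcaveOn_log_Ioi.concaveOn.comp_affineMap
    (AffineMap.const ℝ ℝ (1 : ℝ) + c • AffineMap.id ℝ ℝ)).subset (fun p hp => ?_) (convex_Ici 0)
  have hp : 0 ≤ p := hp
  show 0 < 1 + c * p
  positivity

/-- Convexity of the per-link capacity constraint region: nonnegative flow f
not exceeding the Shannon capacity N·log(1 + c·p/N) with p ≥ 0, N > 0. -/
theorem stmt_5 (c : ℝ) (hc : 0 < c) :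
    Convex ℝ {t : ℝ × ℝ × ℝ | 0 ≤ t.1 ∧ 0 ≤ t.2.1 ∧ 0 < t.2.2 ∧
      t.1 ≤ t.2.2 * Real.log (1 + c * t.2.1 / t.2.2)} := by
  have hflow : Convex ℝ {t : ℝ × ℝ × ℝ | 0 ≤ t.1} :=
    convex_halfSpace_ge (LinearMap.fst ℝ ℝ (ℝ × ℝ)).isLinear 0
  have hcap := ((concaveOn_log_one_add_mul hc.le).perspective.convex_hypograph).linear_preimage
    (LinearEquiv.prodComm ℝ ℝ (ℝ × ℝ)).toLinearMap
  convert hflow.inter hcap using 1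
  refine Set.ext fun ⟨f, p, N⟩ => ?_
  simp only [mem_ofPred_eq, mem_inter_iff, mem_preimage, mem_Ici, LinearEquiv.coe_coe,
    LinearEquiv.prodComm_apply, Prod.swap_prod_mk, smul_eq_mul]
  rw [mul_div_assoc, div_eq_inv_mul]
  constructor
  · rintro ⟨hf, hp, hN, hf_le⟩
    exact ⟨hf, ⟨hN, by positivity⟩, hf_le⟩
  · rintro ⟨hf, ⟨hN, hp⟩, hf_le⟩
    exact ⟨hf, (mul_nonneg_iff_of_pos_left (inv_pos.2 hN)).1 hp, hN, hf_le⟩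
end
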